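/- Let M be a real symmetric positive definite matrix of size (n+m)×(n+m) written in block form M = [[A, B], [Bᵀ, D]] with A of size n×n. For c₁ ∈ ℝⁿ, c₂ ∈ ℝᵐ and c = (c₁, c₂) ∈ ℝ^{n+m}, one has c₁ᵀ A⁻¹ c₁ = cᵀ M⁻¹ c if and only if c₂ = Bᵀ A⁻¹ c₁. In particular, if c₂ ≠ Bᵀ A⁻¹ c₁ then c₁ᵀ A⁻¹ c₁ < cᵀ M⁻¹ c strictly. -/

import Mathlib

/-!
Put `v = (A⁻¹ c₁, 0)` and `u = M⁻¹ c`. Then `M v = (c₁, Bᵀ A⁻¹ c₁)`, so `vᵀ M v = vᵀ c = c₁ᵀ A⁻¹ c₁`,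
and completing the square gives `(v - u)ᵀ M (v - u) = cᵀ M⁻¹ c - c₁ᵀ A⁻¹ c₁`. Positive
definiteness makes this gap nonnegative, and zero exactly when `v = u`, i.e. when `M v = c`,
which is the condition `c₂ = Bᵀ A⁻¹ c₁`.
-/

open Matrix

section CompletingTheSquare

variable {ι R : Type*} [Fintype ι] [DecidableEq ι] [CommRing R]

theorem Matrix.IsSymm.dotProduct_mulVec_sub_inv_mulVec {M : Matrix ι ι R} (hM : M.IsSymm)
    (hdet : IsUnit M.det) (v c : ι → R) :
    (v - M⁻¹ *ᵥ c) ⬝ᵥ M *ᵥ (v - M⁻¹ *ᵥ c) = v ⬝ᵥ M *ᵥ v - 2 * (v ⬝ᵥ c) + c ⬝ᵥ M⁻¹ *ᵥ c := by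
  have hMu : M *ᵥ (M⁻¹ *ᵥ c) = c := by
    rw [mulVec_mulVec, mul_nonsing_inv M hdet, one_mulVec]
  have hsymm : M⁻¹ *ᵥ c ⬝ᵥ M *ᵥ v = v ⬝ᵥ c := by
    rw [dotProduct_mulVec, ← mulVec_transpose, hM.eq, hMu, dotProduct_comm]
  rw [mulVec_sub, dotProduct_sub, sub_dotProduct, sub_dotProduct, hMu, hsymm,
    dotProduct_comm (M⁻¹ *ᵥ c) c]
  ring

end CompletingTheSquare

section Blocks

variable {n m R : Type*} [Fintype n] [Fintype m] [DecidableEq n] [CommRing R]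
  {A : Matrix n n R} {B : Matrix n m R} {C : Matrix m n R} {D : Matrix m m R}

theorem fromBlocks_mulVec_sumElim_inv_mulVec_zero (hA : IsUnit A.det) (c₁ : n → R) :
    fromBlocks A B C D *ᵥ Sum.elim (A⁻¹ *ᵥ c₁) 0 = Sum.elim c₁ (C *ᵥ (A⁻¹ *ᵥ c₁)) := by
  simp [fromBlocks_mulVec, mulVec_mulVec, mul_nonsing_inv A hA]

variable [DecidableEq m]

theorem fromBlocks_quadForm_sub_inv_mulVec (hM : (fromBlocks A B C D).IsSymm)
    (hMdet : IsUnit (fromBlocks A B C D).det) (hA : IsUnit A.det) (c₁ : n → R) (c₂ : m → R) :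
    (Sum.elim (A⁻¹ *ᵥ c₁) 0 - (fromBlocks A B C D)⁻¹ *ᵥ Sum.elim c₁ c₂) ⬝ᵥ
        fromBlocks A B C D *ᵥ
          (Sum.elim (A⁻¹ *ᵥ c₁) 0 - (fromBlocks A B C D)⁻¹ *ᵥ Sum.elim c₁ c₂) =
      Sum.elim c₁ c₂ ⬝ᵥ (fromBlocks A B C D)⁻¹ *ᵥ Sum.elim c₁ c₂ - c₁ ⬝ᵥ A⁻¹ *ᵥ c₁ := by
  rw [hM.dotProduct_mulVec_sub_inv_mulVec hMdet, fromBlocks_mulVec_sumElim_inv_mulVec_zero hA,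
    sumElim_dotProduct_sumElim, sumElim_dotProduct_sumElim, zero_dotProduct, zero_dotProduct,
    add_zero, dotProduct_comm c₁ (A⁻¹ *ᵥ c₁)]
  ring

theorem sumElim_sub_fromBlocks_inv_mulVec_eq_zero_iff (hMdet : IsUnit (fromBlocks A B C D).det)
    (hA : IsUnit A.det) (c₁ : n → R) (c₂ : m → R) :
    Sum.elim (A⁻¹ *ᵥ c₁) 0 - (fromBlocks A B C D)⁻¹ *ᵥ Sum.elim c₁ c₂ = 0 ↔
      c₂ = C *ᵥ (A⁻¹ *ᵥ c₁) := by
  rw [sub_eq_zero, ← (mulVec_injective_of_isUnit ((isUnit_iff_isUnit_det _).2 hMdet)).eq_iff,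
    mulVec_mulVec, mul_nonsing_inv _ hMdet, one_mulVec,
    fromBlocks_mulVec_sumElim_inv_mulVec_zero hA, Sum.elim_eq_iff, eq_comm (a := C *ᵥ _)]
  exact and_iff_right rfl

end Blocks

/-- **Equality case of the block quadratic-form inequality (strict variance reduction).**
For a real symmetric positive definite block matrix `M = [[A, B], [Bᵀ, D]]` and
`c = (c₁, c₂)`, one has `c₁ᵀ A⁻¹ c₁ = cᵀ M⁻¹ c` iff `c₂ = Bᵀ A⁻¹ c₁`; in particular
if `c₂ ≠ Bᵀ A⁻¹ c₁` then the inequality is strict. -/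
theorem block_inverse_quadratic_form_eq_iff
    (n m : ℕ)
    (A : Matrix (Fin n) (Fin n) ℝ) (B : Matrix (Fin n) (Fin m) ℝ)
    (D : Matrix (Fin m) (Fin m) ℝ)
    (M : Matrix (Fin n ⊕ Fin m) (Fin n ⊕ Fin m) ℝ)
    (hM : M = fromBlocks A B Bᵀ D)
    (hpd : M.PosDef) :
    ∀ (c₁ : Fin n → ℝ) (c₂ : Fin m → ℝ),
      (c₁ ⬝ᵥ A⁻¹ *ᵥ c₁ = (Sum.elim c₁ c₂) ⬝ᵥ M⁻¹ *ᵥ (Sum.elim c₁ c₂) ↔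
        c₂ = Bᵀ *ᵥ (A⁻¹ *ᵥ c₁)) ∧
      (c₂ ≠ Bᵀ *ᵥ (A⁻¹ *ᵥ c₁) →
        c₁ ⬝ᵥ A⁻¹ *ᵥ c₁ < (Sum.elim c₁ c₂) ⬝ᵥ M⁻¹ *ᵥ (Sum.elim c₁ c₂)) := by
  subst hM
  intro c₁ c₂
  have hsymm : (fromBlocks A B Bᵀ D).IsSymm :=
    (conjTranspose_eq_transpose_of_trivial _).symm.trans hpd.isHermitian
  have hMdet : IsUnit (fromBlocks A B Bᵀ D).det := hpd.det_pos.ne'.isUnit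
  have hAdet : IsUnit A.det := (hpd.submatrix Sum.inl_injective).det_pos.ne'.isUnit
  have hgap := fromBlocks_quadForm_sub_inv_mulVec hsymm hMdet hAdet c₁ c₂
  have hzero := sumElim_sub_fromBlocks_inv_mulVec_eq_zero_iff hMdet hAdet c₁ c₂
  set w := Sum.elim (A⁻¹ *ᵥ c₁) 0 - (fromBlocks A B Bᵀ D)⁻¹ *ᵥ Sum.elim c₁ c₂
  have hpos (hne : c₂ ≠ Bᵀ *ᵥ (A⁻¹ *ᵥ c₁)) : 0 < w ⬝ᵥ fromBlocks A B Bᵀ D *ᵥ w := by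
    simpa only [star_trivial] using hpd.dotProduct_mulVec_pos (mt hzero.1 hne)
  refine ⟨⟨fun heq => ?_, fun h => ?_⟩, fun hne => by linarith [hpos hne]⟩
  · by_contra hne
    linarith [hpos hne]
  · rw [hzero.2 h, zero_dotProduct] at hgap
    linarith
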